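/- arXiv:2512.03249 — 2 statements merged into one kernel-verified Lean document; each statement's English description precedes it below -/
import Mathlib

section
/- Let f : ℝ^d → ℝ be the electrostatic potential of n charges, f(x) = Σ_{i=1}^n q_i / ‖x − a_i‖, with distinct points a_i, min_i |q_i| = 1, min over distinct pairs i≠i' of max_j |a_{i,j} − a_{i',j}| = 1, and q_max = max_i |q_i|. Fix ε > 0 and set ρ = 1/(d√d·(4n·q_max + ε)). Then for every i and every x with 0 < ‖x − a_i‖_∞ ≤ ρ, there exists a coordinate ℓ ∈ [d] with |∂f/∂x_ℓ(x)| > ε; that is, there is no ε-approximate equilibrium point in the hypercube of radius ρ around any charge. -/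
lemma rpow_three_halves {S : ℝ} (hS : 0 ≤ S) :
    S ^ ((3 : ℝ) / 2) = Real.sqrt S ^ 3 := by
  rw [Real.sqrt_eq_rpow, ← Real.rpow_natCast (S ^ ((1 : ℝ) / 2)) 3, ← Real.rpow_mul hS]
  norm_num

lemma sq_le_sq_of_abs_le {y m : ℝ} (h : |y| ≤ m) : y ^ 2 ≤ m ^ 2 := by
  have := pow_le_pow_left₀ (abs_nonneg y) h 2
  rwa [sq_abs] at this

lemma sq_le_sq_of_le_abs {c y : ℝ} (hc : 0 ≤ c) (h : c ≤ |y|) : c ^ 2 ≤ y ^ 2 := by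
  have := pow_le_pow_left₀ hc h 2
  rwa [sq_abs] at this

lemma aux_term_bound {c y t qm : ℝ} (hc : c ≤ qm) (hc0 : 0 ≤ c) (hy0 : 0 ≤ y)
    (hyt : y ≤ t) (ht : 3 / 4 ≤ t) (hqm : 1 ≤ qm) : c * y ≤ 4 * qm * t ^ 3 := by
  have hq0 : (0 : ℝ) ≤ qm := le_trans zero_le_one hqm
  have htpos : (0 : ℝ) < t := by linarith
  have s1 : c * y ≤ qm * t := mul_le_mul hc hyt hy0 hq0
  have s2 : (0 : ℝ) ≤ 4 * t ^ 2 - 1 := by nlinarith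
  have s3 : (0 : ℝ) ≤ qm * t * (4 * t ^ 2 - 1) :=
    mul_nonneg (mul_nonneg hq0 htpos.le) s2
  nlinarith

lemma aux_main_term {Q ti s D m : ℝ} (h1 : ti ≤ s) (h2 : s ^ 3 = D * m ^ 2 * m)
    (hQ : 1 ≤ Q) (hti : 0 < ti) (hm : 0 < m) (hD : 0 < D) :
    1 * ti ^ 3 ≤ Q * m * (D * m ^ 2) := by
  have h3 : ti ^ 3 ≤ s ^ 3 := pow_le_pow_left₀ hti.le h1 3
  have h4 : (0 : ℝ) ≤ (Q - 1) * (m * (D * m ^ 2)) :=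
    mul_nonneg (by linarith) (by positivity)
  nlinarith

lemma aux_sq_mono {D m ρ : ℝ} (hm : 0 ≤ m) (hmρ : m ≤ ρ) (hD : 0 < D) :
    D * m ^ 2 ≤ D * ρ ^ 2 := by
  have h := pow_le_pow_left₀ hm hmρ 2
  exact mul_le_mul_of_nonneg_left h hD.le

/-- No ε-approximate equilibrium point of the electrostatic potential in the
ℓ∞-hypercube of radius `ρ = 1/(d√d(4n·q_max + ε))` around any charge. -/
theorem stmt2 (d n : ℕ) (hd : 0 < d) (hn : 0 < n)
    (a : Fin n → Fin d → ℝ) (q : Fin n → ℝ) (ε : ℝ) (hε : 0 < ε)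
    (grad : Fin d → (Fin d → ℝ) → ℝ)
    (hgrad : ∀ (ℓ : Fin d) (x : Fin d → ℝ),
      grad ℓ x = ∑ i, -q i * (x ℓ - a i ℓ) / (∑ j, (x j - a i j) ^ 2) ^ ((3 : ℝ) / 2))
    -- normalization: the minimum magnitude of the charges is 1
    (hq1 : ∀ i, 1 ≤ |q i|) (hq1' : ∃ i, |q i| = 1)
    -- q_max is the maximum magnitude of the charges
    (qmax : ℝ) (hqmax : ∀ i, |q i| ≤ qmax) (hqmax' : ∃ i, |q i| = qmax)
    -- normalization: the minimum over distinct pairs of `max_j |a i j - a i' j|` is 1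
    (hsep : ∀ i i', i ≠ i' → ∃ j, 1 ≤ |a i j - a i' j|)
    (hsep' : n = 1 ∨ ∃ i i', i ≠ i' ∧ ∀ j, |a i j - a i' j| ≤ 1)
    (ρ : ℝ) (hρ : ρ = 1 / (d * Real.sqrt d * (4 * n * qmax + ε)))
    (i : Fin n) (x : Fin d → ℝ) (hx : x ≠ a i) (hxρ : ∀ j, |x j - a i j| ≤ ρ) :
    ∃ ℓ : Fin d, ε < |grad ℓ x| := by
  classical
  have hq : (1 : ℝ) ≤ qmax := le_trans (hq1 i) (hqmax i)
  have hd1 : (1 : ℝ) ≤ (d : ℝ) := by exact_mod_cast hd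
  have hn1 : (1 : ℝ) ≤ (n : ℝ) := by exact_mod_cast hn
  set sd := Real.sqrt d with hsd_def
  have hsd1 : (1 : ℝ) ≤ sd := by
    rw [hsd_def, show (1 : ℝ) = Real.sqrt 1 by simp]
    exact Real.sqrt_le_sqrt hd1
  have hsd2 : sd ^ 2 = (d : ℝ) := Real.sq_sqrt (by positivity)
  set D := (d : ℝ) * sd with hD_def
  have hD1 : (1 : ℝ) ≤ D := by nlinarith
  have hDpos : (0 : ℝ) < D := by linarith
  set A := 4 * (n : ℝ) * qmax + ε with hA_def
  have hA4 : (4 : ℝ) ≤ A := by nlinarith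
  have hApos : (0 : ℝ) < A := by linarith
  have hρ' : ρ = 1 / (D * A) := by rw [hρ]
  have hρpos : 0 < ρ := by rw [hρ']; positivity
  have hρA : D * ρ = 1 / A := by
    rw [hρ']; field_simp
  have hρ4 : ρ ≤ 1 / 4 := by
    rw [hρ', div_le_div_iff₀ (by positivity) (by norm_num)]
    nlinarith
  -- choose maximal coordinate
  obtain ⟨ℓ, -, hℓ⟩ := Finset.exists_max_image (Finset.univ : Finset (Fin d))
    (fun j => |x j - a i j|) ⟨⟨0, hd⟩, Finset.mem_univ _⟩
  set m := |x ℓ - a i ℓ| with hm_def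
  have hm_max : ∀ j, |x j - a i j| ≤ m := fun j => hℓ j (Finset.mem_univ j)
  have hmpos : 0 < m := by
    rcases lt_or_ge 0 m with h | h
    · exact h
    · exfalso
      apply hx
      funext j
      have h1 := hm_max j
      have h2 := abs_nonneg (x j - a i j)
      have hz : |x j - a i j| = 0 := le_antisymm (le_trans h1 h) h2
      have := abs_eq_zero.mp hz
      linarith [sub_eq_zero.mp this, le_of_eq (sub_eq_zero.mp this)]
  have hmρ : m ≤ ρ := hxρ ℓ
  set f : Fin n → ℝ :=
    fun k => -q k * (x ℓ - a k ℓ) / (∑ j, (x j - a k j) ^ 2) ^ ((3 : ℝ) / 2) with hf_def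
  have hS : ∀ k : Fin n, (0 : ℝ) ≤ ∑ j, (x j - a k j) ^ 2 := fun k => by positivity
  -- bound on the terms from the other charges
  have hbound : ∀ k ∈ Finset.univ.erase i, |f k| ≤ 4 * qmax := by
    intro k hk
    have hki : k ≠ i := Finset.ne_of_mem_erase hk
    obtain ⟨j, hj⟩ := hsep i k (Ne.symm hki)
    have hxj : (3 : ℝ) / 4 ≤ |x j - a k j| := by
      have h1 := hxρ j
      have h2 := abs_sub_abs_le_abs_sub (a i j - a k j) (a i j - x j)
      have h3 : (a i j - a k j) - (a i j - x j) = x j - a k j := by ring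
      rw [h3] at h2
      have h4 : |a i j - x j| = |x j - a i j| := abs_sub_comm _ _
      rw [h4] at h2
      linarith
    have hSk : ((3 : ℝ) / 4) ^ 2 ≤ ∑ j', (x j' - a k j') ^ 2 := by
      calc ((3 : ℝ) / 4) ^ 2 ≤ (x j - a k j) ^ 2 :=
            sq_le_sq_of_le_abs (by norm_num) hxj
        _ ≤ ∑ j', (x j' - a k j') ^ 2 :=
            Finset.single_le_sum (f := fun j' => (x j' - a k j') ^ 2)
              (fun j' _ => sq_nonneg _) (Finset.mem_univ j)
    set t := Real.sqrt (∑ j', (x j' - a k j') ^ 2) with ht_def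
    have ht : (3 : ℝ) / 4 ≤ t := by
      have := Real.sqrt_le_sqrt hSk
      rwa [Real.sqrt_sq (by norm_num)] at this
    have htpos : 0 < t := by linarith
    have hyt : |x ℓ - a k ℓ| ≤ t := by
      have h1 : (x ℓ - a k ℓ) ^ 2 ≤ ∑ j', (x j' - a k j') ^ 2 :=
        Finset.single_le_sum (f := fun j' => (x j' - a k j') ^ 2)
          (fun j' _ => sq_nonneg _) (Finset.mem_univ ℓ)
      have := Real.sqrt_le_sqrt h1
      rwa [Real.sqrt_sq_eq_abs] at this
    have hfk : f k = -q k * (x ℓ - a k ℓ) / t ^ 3 := by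
      rw [hf_def]
      simp only
      rw [rpow_three_halves (hS k)]
    rw [hfk, abs_div, abs_mul, abs_neg, abs_of_pos (pow_pos htpos 3),
      div_le_iff₀ (pow_pos htpos 3)]
    have hqk := hqmax k
    have hqk0 := abs_nonneg (q k)
    have hy0 := abs_nonneg (x ℓ - a k ℓ)
    exact aux_term_bound hqk hqk0 hy0 hyt ht hq
  -- lower bound on the term from charge i
  have hSile : ∑ j, (x j - a i j) ^ 2 ≤ (d : ℝ) * m ^ 2 := by
    calc ∑ j, (x j - a i j) ^ 2 ≤ ∑ _j : Fin d, m ^ 2 :=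
          Finset.sum_le_sum (fun j _ => sq_le_sq_of_abs_le (hm_max j))
      _ = (d : ℝ) * m ^ 2 := by simp [Finset.sum_const, nsmul_eq_mul]
  have hSige : m ^ 2 ≤ ∑ j, (x j - a i j) ^ 2 := by
    have h1 : (x ℓ - a i ℓ) ^ 2 ≤ ∑ j, (x j - a i j) ^ 2 :=
      Finset.single_le_sum (f := fun j => (x j - a i j) ^ 2)
        (fun j' _ => sq_nonneg _) (Finset.mem_univ ℓ)
    rwa [← sq_abs, ← hm_def] at h1
  set ti := Real.sqrt (∑ j, (x j - a i j) ^ 2) with hti_def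
  have hti_pos : 0 < ti := Real.sqrt_pos.mpr (lt_of_lt_of_le (by positivity) hSige)
  have hti_le : ti ≤ sd * m := by
    have h1 := Real.sqrt_le_sqrt hSile
    have h2 : Real.sqrt ((d : ℝ) * m ^ 2) = sd * m := by
      rw [Real.sqrt_mul (by positivity), Real.sqrt_sq hmpos.le, hsd_def]
    rwa [h2] at h1
  have hfi : 1 / (D * m ^ 2) ≤ |f i| := by
    have hfieq : f i = -q i * (x ℓ - a i ℓ) / ti ^ 3 := by
      rw [hf_def]
      simp only
      rw [rpow_three_halves (hS i)]
    rw [hfieq, abs_div, abs_mul, abs_neg, abs_of_pos (pow_pos hti_pos 3), ← hm_def,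
      div_le_div_iff₀ (by positivity) (pow_pos hti_pos 3)]
    have h2 : (sd * m) ^ 3 = D * m ^ 2 * m := by
      rw [hD_def, ← hsd2]; ring
    exact aux_main_term hti_le h2 (hq1 i) hti_pos hmpos hDpos
  -- assemble
  have hsplit : ∑ k, f k = f i + ∑ k ∈ Finset.univ.erase i, f k :=
    (Finset.add_sum_erase _ f (Finset.mem_univ i)).symm
  have hR : |∑ k ∈ Finset.univ.erase i, f k| ≤ 4 * (n : ℝ) * qmax := by
    calc |∑ k ∈ Finset.univ.erase i, f k| ≤ ∑ k ∈ Finset.univ.erase i, |f k| :=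
          Finset.abs_sum_le_sum_abs _ _
      _ ≤ (Finset.univ.erase i).card • (4 * qmax) :=
          Finset.sum_le_card_nsmul _ _ _ hbound
      _ = ((Finset.univ.erase i).card : ℝ) * (4 * qmax) := nsmul_eq_mul _ _
      _ ≤ (n : ℝ) * (4 * qmax) := by
          have hc : (Finset.univ.erase i).card ≤ n := by
            calc (Finset.univ.erase i).card ≤ (Finset.univ : Finset (Fin n)).card :=
                  Finset.card_le_card (Finset.erase_subset _ _)
              _ = n := by simp
          have hc' : (((Finset.univ.erase i).card : ℕ) : ℝ) ≤ (n : ℝ) := by exact_mod_cast hc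
          exact mul_le_mul_of_nonneg_right hc' (by linarith)
      _ = 4 * (n : ℝ) * qmax := by ring
  have habs : |f i| - |∑ k ∈ Finset.univ.erase i, f k| ≤ |∑ k, f k| := by
    rw [hsplit]
    have h := abs_sub_abs_le_abs_sub (f i) (-(∑ k ∈ Finset.univ.erase i, f k))
    rw [abs_neg, sub_neg_eq_add] at h
    exact h
  have hmain : 4 * A ≤ 1 / (D * m ^ 2) := by
    rw [le_div_iff₀ (by positivity)]
    have h1 : D * m ^ 2 ≤ D * ρ ^ 2 := aux_sq_mono hmpos.le hmρ hDpos
    have h2 : D * ρ ^ 2 = ρ / A := by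
      have h3 : D * ρ ^ 2 = (D * ρ) * ρ := by ring
      rw [h3, hρA]; ring
    have h4 : 4 * A * (D * m ^ 2) ≤ 4 * A * (ρ / A) :=
      mul_le_mul_of_nonneg_left (le_trans h1 (le_of_eq h2)) (by positivity)
    have h5 : 4 * A * (ρ / A) = 4 * ρ := by
      field_simp
    have h6 : 4 * A * (D * m ^ 2) ≤ 4 * ρ := h4.trans (le_of_eq h5)
    linarith [h6, hρ4]
  refine ⟨ℓ, ?_⟩
  rw [hgrad ℓ x]
  have hnq : (0 : ℝ) ≤ (n : ℝ) * qmax := mul_nonneg (by positivity) (by linarith)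
  have hgoal : ∑ k : Fin n,
      -q k * (x ℓ - a k ℓ) / (∑ j, (x j - a k j) ^ 2) ^ ((3 : ℝ) / 2) = ∑ k, f k := rfl
  rw [hgoal]
  have : 4 * A - 4 * (n : ℝ) * qmax ≤ |∑ k, f k| := by linarith
  rw [hA_def] at this
  linarith
end

section
/- Poincaré–Miranda theorem: Let f = (f_1,…,f_n) : [−a,a]^n → ℝ^n be continuous, and suppose that for each i, f_i ≤ 0 on the face {x_i = −a} and f_i ≥ 0 on the face {x_i = a}. Then there exists x ∈ [−a,a]^n with f(x) = 0. -/
/-!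
Kuhn's proof via a cubical Sperner lemma. Cut the cube into `N^n` small cubes and each of those
into the `n!` simplices of Kuhn's triangulation. Label a grid point `p` by the least `i` with
`p_i < N` and `f(p)_i ≤ 0`, or by `n` if there is none; on the face `p_i = 0` the label is at most
`i`, on the face `p_i = N` it is not `i`. For such a labelling the number of simplices carrying
all labels `0, …, n` is odd: counting doors (facets labelled `0, …, n - 1`) simplex by simplex
gives the same parity, and the doors pair up across interior facets, except those lying in the face
`p_{n-1} = 0`, which are the fully labelled simplices of the labelling restricted to that face, so
induction on `n` applies. In a fully labelled simplex, whose vertices are `2a/N`-close, `f ≥ 0`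
at the vertex labelled `n` and `f_i ≤ 0` at the vertex labelled `i`. By uniform continuity `‖f‖`
gets arbitrarily small on the cube, and by compactness it vanishes somewhere.
-/

open Finset

lemma Finset.even_card_of_involution {α : Type*} {s : Finset α} (g : α → α)
    (hg_mem : ∀ a ∈ s, g a ∈ s) (hg_inv : ∀ a ∈ s, g (g a) = a) (hg_ne : ∀ a ∈ s, g a ≠ a) :
    Even #s := by
  rw [← ZMod.natCast_eq_zero_iff_even, card_eq_sum_ones, Nat.cast_sum]
  exact sum_involution (fun a _ => g a) (fun _ _ => by decide) (fun a ha _ => hg_ne a ha)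
    hg_mem hg_inv

lemma IsCompact.exists_eq_zero_of_forall_exists_norm_lt {X E : Type*} [TopologicalSpace X]
    [NormedAddCommGroup E] {K : Set X} (hK : IsCompact K) {f : X → E} (hf : ContinuousOn f K)
    (h : ∀ ε > 0, ∃ y ∈ K, ‖f y‖ < ε) : ∃ x ∈ K, f x = 0 := by
  obtain ⟨y, hy, -⟩ := h 1 one_pos
  obtain ⟨x, hx, hmin⟩ := hK.exists_isMinOn ⟨y, hy⟩ hf.norm
  refine ⟨x, hx, norm_le_zero_iff.mp (le_of_forall_pos_lt_add fun ε hε => ?_)⟩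
  obtain ⟨y, hy, hyε⟩ := h ε hε
  simpa using (hmin hy).trans_lt hyε

lemma finRotate_inv_zero (m : ℕ) : (finRotate (m + 1))⁻¹ 0 = Fin.last m := by
  rw [Equiv.Perm.inv_eq_iff_eq, finRotate_last]

namespace PoincareMiranda

open scoped Classical

section Labels

variable {d : ℕ}

def IsDoor (L : Fin (d + 1) → ℕ) (k : Fin (d + 1)) : Prop := ∀ m < d, ∃ j ≠ k, L j = m

def IsFull (L : Fin (d + 1) → ℕ) : Prop := ∀ m ≤ d, ∃ k, L k = m

lemma isDoor_zero_iff {L : Fin (d + 1) → ℕ} :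
    IsDoor L 0 ↔ ∀ m < d, ∃ j : Fin d, L j.succ = m := by
  simp [IsDoor, Fin.exists_fin_succ, Fin.succ_ne_zero]

lemma isDoor_last_iff {L : Fin (d + 1) → ℕ} :
    IsDoor L (Fin.last d) ↔ ∀ m < d, ∃ j : Fin d, L j.castSucc = m := by
  simp [IsDoor, Fin.exists_fin_succ', Fin.castSucc_ne_last]

lemma IsDoor.congr {L L' : Fin (d + 1) → ℕ} {k : Fin (d + 1)} (hk : IsDoor L k)
    (h : ∀ j ≠ k, L' j = L j) : IsDoor L' k := fun m hm => by
  obtain ⟨j, hjk, hj⟩ := hk m hm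
  exact ⟨j, hjk, (h j hjk).trans hj⟩

lemma IsDoor.image_erase_eq {L : Fin (d + 1) → ℕ} {k : Fin (d + 1)} (hk : IsDoor L k) :
    (univ.erase k).image L = range d := by
  refine (eq_of_subset_of_card_le (fun m hm => ?_) ?_).symm
  · obtain ⟨j, hjk, rfl⟩ := hk m (mem_range.mp hm)
    exact mem_image_of_mem L (mem_erase.mpr ⟨hjk, mem_univ j⟩)
  · simpa using card_image_le (s := univ.erase k) (f := L)

lemma IsDoor.injOn {L : Fin (d + 1) → ℕ} {k : Fin (d + 1)} (hk : IsDoor L k) :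
    Set.InjOn L {j | j ≠ k} := by
  have h := injOn_of_card_image_eq (s := univ.erase k) (f := L) (by simp [hk.image_erase_eq])
  rwa [coe_erase, coe_univ, ← Set.compl_eq_univ_sdiff] at h

lemma card_isDoor_of_isFull {L : Fin (d + 1) → ℕ} (hL : ∀ k, L k ≤ d) (hfull : IsFull L) :
    #{k | IsDoor L k} = 1 := by
  have hinj : L.Injective := by
    let L' : Fin (d + 1) → Fin (d + 1) := fun k => ⟨L k, Nat.lt_succ_of_le (hL k)⟩
    have : L'.Injective := Finite.injective_iff_surjective.mpr fun m => by
      obtain ⟨k, hk⟩ := hfull m (Nat.lt_succ_iff.mp m.isLt)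
      exact ⟨k, Fin.ext hk⟩
    exact fun j k h => this (Fin.ext h)
  obtain ⟨k₀, hk₀⟩ := hfull d le_rfl
  refine card_eq_one.mpr ⟨k₀, eq_singleton_iff_unique_mem.mpr ⟨?_, fun k hk => ?_⟩⟩
  · simp only [mem_filter, mem_univ, true_and]
    intro m hm
    obtain ⟨j, rfl⟩ := hfull m hm.le
    exact ⟨j, fun h => by subst h; omega, rfl⟩
  · simp only [mem_filter, mem_univ, true_and] at hk
    by_contra hne
    have hlt : L k < d := lt_of_le_of_ne (hL k) fun h => hne (hinj (h.trans hk₀.symm))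
    obtain ⟨j, hjk, hj⟩ := hk (L k) hlt
    exact hjk (hinj hj)

/- Each door `k` has a partner: the other `d` vertices carry the `d` labels below `d` bijectively,
so exactly one of them shares the label of `k`, and it is again a door. -/
lemma even_card_isDoor_of_not_isFull {L : Fin (d + 1) → ℕ} (hL : ∀ k, L k ≤ d)
    (hfull : ¬IsFull L) : Even #{k | IsDoor L k} := by
  have hlt : ∀ k, IsDoor L k → L k < d := by
    intro k hk
    refine lt_of_le_of_ne (hL k) fun hd => hfull fun m hm => ?_
    rcases hm.lt_or_eq with hm | rfl
    · obtain ⟨j, -, hj⟩ := hk m hm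
      exact ⟨j, hj⟩
    · exact ⟨k, hd⟩
  let partner : Fin (d + 1) → Fin (d + 1) := fun k =>
    if h : ∃ j ≠ k, L j = L k then h.choose else k
  have partner_spec : ∀ k, IsDoor L k → partner k ≠ k ∧ L (partner k) = L k := fun k hk => by
    have h : ∃ j ≠ k, L j = L k := hk (L k) (hlt k hk)
    simpa only [partner, dif_pos h] using h.choose_spec
  have partner_isDoor : ∀ k, IsDoor L k → IsDoor L (partner k) := fun k hk m hm => by
    obtain ⟨hne, heq⟩ := partner_spec k hk
    by_cases hmk : L k = m
    · exact ⟨k, hne.symm, hmk⟩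
    · obtain ⟨j, hjk, hj⟩ := hk m hm
      exact ⟨j, fun h => hmk (by rw [← heq, ← h, hj]), hj⟩
  refine even_card_of_involution partner (fun k hk => ?_) (fun k hk => ?_) (fun k hk => ?_)
  all_goals simp only [mem_filter, mem_univ, true_and] at hk ⊢
  · exact partner_isDoor k hk
  · obtain ⟨hne, heq⟩ := partner_spec k hk
    obtain ⟨hne', heq'⟩ := partner_spec _ (partner_isDoor k hk)
    exact (partner_isDoor k hk).injOn hne' (Ne.symm hne) (heq'.trans heq)
  · exact (partner_spec k hk).1

lemma card_isDoor_modTwo {L : Fin (d + 1) → ℕ} (hL : ∀ k, L k ≤ d) :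
    (#{k | IsDoor L k} : ZMod 2) = if IsFull L then 1 else 0 := by
  split_ifs with hfull
  · simp [card_isDoor_of_isFull hL hfull]
  · exact ZMod.natCast_eq_zero_iff_even.mpr (even_card_isDoor_of_not_isFull hL hfull)

end Labels

section Kuhn

def extendLast {m : ℕ} (σ : Equiv.Perm (Fin m)) : Equiv.Perm (Fin (m + 1)) :=
  finSuccEquivLast.symm.permCongr σ.optionCongr

@[simp] lemma extendLast_castSucc {m : ℕ} (σ : Equiv.Perm (Fin m)) (j : Fin m) :
    extendLast σ j.castSucc = (σ j).castSucc := by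
  simp [extendLast]

@[simp] lemma extendLast_last {m : ℕ} (σ : Equiv.Perm (Fin m)) :
    extendLast σ (Fin.last m) = Fin.last m := by
  simp [extendLast]

lemma extendLast_injective {m : ℕ} : Function.Injective (extendLast (m := m)) := by
  intro σ τ h
  ext j
  simpa using congrArg (fun π : Equiv.Perm (Fin (m + 1)) => (π j.castSucc : ℕ)) h

lemma exists_extendLast_eq {m : ℕ} {π : Equiv.Perm (Fin (m + 1))}
    (hπ : π (Fin.last m) = Fin.last m) : ∃ σ, extendLast σ = π := by
  refine ⟨Equiv.removeNone (finSuccEquivLast.permCongr π), Equiv.ext fun x => ?_⟩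
  induction x using Fin.lastCases with
  | last => simp [hπ]
  | cast j =>
    have hne : π j.castSucc ≠ Fin.last m := fun h =>
      (Fin.castSucc_lt_last j).ne (π.injective (h.trans hπ.symm))
    obtain ⟨j', hj'⟩ := Fin.exists_castSucc_eq.mpr hne
    rw [extendLast_castSucc, ← hj']
    congr 1
    apply Option.some_injective
    rw [Equiv.removeNone_some _ ⟨j', by simp [← hj']⟩]
    simp [← hj']

variable {d N : ℕ}

abbrev KuhnSimplex (d N : ℕ) := (Fin d → Fin N) × Equiv.Perm (Fin d)

/- Kuhn's triangulation: the simplex `(c, π)` of the cube `c + [0, 1]^d` has the vertices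
`c + e_{π 0} + ⋯ + e_{π (k - 1)}`, `k = 0, …, d`. -/
def kuhnVertex (s : KuhnSimplex d N) (k : Fin (d + 1)) (i : Fin d) : ℕ :=
  s.1 i + if (s.2.symm i : ℕ) < k then 1 else 0

lemma kuhnVertex_mem_Icc (s : KuhnSimplex d N) (k : Fin (d + 1)) (i : Fin d) :
    kuhnVertex s k i ∈ Set.Icc (s.1 i : ℕ) (s.1 i + 1) := by
  unfold kuhnVertex; split_ifs <;> simp

lemma kuhnVertex_le (s : KuhnSimplex d N) (k : Fin (d + 1)) (i : Fin d) : kuhnVertex s k i ≤ N :=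
  (kuhnVertex_mem_Icc s k i).2.trans (s.1 i).isLt

lemma abs_kuhnVertex_sub_le (s : KuhnSimplex d N) (j k : Fin (d + 1)) (i : Fin d) :
    |(kuhnVertex s j i : ℝ) - kuhnVertex s k i| ≤ 1 := by
  obtain ⟨hj₁, hj₂⟩ := kuhnVertex_mem_Icc s j i
  obtain ⟨hk₁, hk₂⟩ := kuhnVertex_mem_Icc s k i
  rw [abs_le]
  constructor <;> [have := hk₂; have := hj₂] <;> · push_cast [← Nat.cast_le (α := ℝ)] at *; linarith

lemma kuhnVertex_mul_swap (c : Fin d → Fin N) (π : Equiv.Perm (Fin d)) {a b : Fin d}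
    {k : Fin (d + 1)} (hk : (a : ℕ) < k ↔ (b : ℕ) < k) :
    kuhnVertex (c, π * Equiv.swap a b) k = kuhnVertex (c, π) k := by
  funext i
  simp only [kuhnVertex, Equiv.Perm.mul_def, Equiv.symm_trans_apply, Equiv.symm_swap]
  rcases eq_or_ne (π.symm i) a with h | h
  · simp [h, hk]
  rcases eq_or_ne (π.symm i) b with h' | h'
  · simp [h', hk]
  · simp [Equiv.swap_apply_of_ne_of_ne h h']

lemma kuhnVertex_rotate {m : ℕ} [NeZero N] (c : Fin (m + 1) → Fin N)
    (π : Equiv.Perm (Fin (m + 1))) (hc : (c (π 0) : ℕ) + 1 < N) (j : Fin (m + 1)) :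
    kuhnVertex (c + Pi.single (π 0) 1, π * finRotate (m + 1)) j.castSucc =
      kuhnVertex (c, π) j.succ := by
  funext i
  obtain ⟨t, rfl⟩ := (π * finRotate (m + 1)).surjective i
  simp only [kuhnVertex, Equiv.symm_apply_apply]
  simp only [Equiv.Perm.coe_mul, Function.comp_apply, Equiv.symm_apply_apply,
    Fin.val_castSucc, Fin.val_succ, Pi.add_apply]
  rcases eq_or_ne t (Fin.last m) with rfl | ht
  · rw [finRotate_last, Pi.single_eq_same, Fin.val_add_one_of_lt' hc]
    simp [Fin.is_le]
  · have hrot : finRotate (m + 1) t ≠ 0 := by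
      rw [Ne, ← finRotate_last, (finRotate (m + 1)).injective.eq_iff]; exact ht
    rw [Pi.single_eq_of_ne (π.injective.ne hrot), add_zero, coe_finRotate_of_ne_last ht]
    simp

lemma kuhnVertex_snoc {m : ℕ} [NeZero N] (c : Fin m → Fin N) (σ : Equiv.Perm (Fin m))
    (j : Fin (m + 1)) :
    kuhnVertex (Fin.snoc c 0, extendLast σ) j.castSucc = Fin.snoc (kuhnVertex (c, σ) j) 0 := by
  funext i
  obtain ⟨t, rfl⟩ := (extendLast σ).surjective i
  simp only [kuhnVertex, Equiv.symm_apply_apply]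
  induction t using Fin.lastCases with
  | last => simp [Fin.is_le]
  | cast t => simp [kuhnVertex]

end Kuhn

structure IsSpernerLabelling (N d : ℕ) (ℓ : (Fin d → ℕ) → ℕ) : Prop where
  le : ∀ p, (∀ i, p i ≤ N) → ℓ p ≤ d
  le_of_eq_zero : ∀ p, (∀ i, p i ≤ N) → ∀ i : Fin d, p i = 0 → ℓ p ≤ i
  ne_of_eq_top : ∀ p, (∀ i, p i ≤ N) → ∀ i : Fin d, p i = N → ℓ p ≠ i

lemma card_isFull_modTwo_eq_card_isDoor {d N : ℕ} {ℓ : (Fin d → ℕ) → ℕ}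
    (hℓ : IsSpernerLabelling N d ℓ) :
    (#{s : KuhnSimplex d N | IsFull (ℓ ∘ kuhnVertex s)} : ZMod 2) =
      #{x : KuhnSimplex d N × Fin (d + 1) | IsDoor (ℓ ∘ kuhnVertex x.1) x.2} := by
  rw [natCast_card_filter, natCast_card_filter, eq_comm, Fintype.sum_prod_type]
  refine Fintype.sum_congr _ _ fun s => ?_
  rw [← natCast_card_filter]
  exact card_isDoor_modTwo fun k => hℓ.le _ (kuhnVertex_le s k)

section Step

variable {m N : ℕ} {ℓ : (Fin (m + 1) → ℕ) → ℕ}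

lemma IsSpernerLabelling.face (hℓ : IsSpernerLabelling N (m + 1) ℓ) :
    IsSpernerLabelling N m (fun p => ℓ (Fin.snoc p 0)) := by
  have hsnoc : ∀ p : Fin m → ℕ, (∀ i, p i ≤ N) → ∀ i, (Fin.snoc p 0 : Fin (m + 1) → ℕ) i ≤ N :=
    fun p hp i => by induction i using Fin.lastCases <;> simp [hp]
  refine ⟨fun p hp => ?_, fun p hp i hi => ?_, fun p hp i hi => ?_⟩
  · simpa using hℓ.le_of_eq_zero _ (hsnoc p hp) (Fin.last m) (by simp)
  · simpa using hℓ.le_of_eq_zero _ (hsnoc p hp) i.castSucc (by simpa using hi)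
  · simpa using hℓ.ne_of_eq_top _ (hsnoc p hp) i.castSucc (by simpa using hi)

lemma IsSpernerLabelling.lt_of_isDoor_zero (hℓ : IsSpernerLabelling N (m + 1) ℓ)
    {c : Fin (m + 1) → Fin N} {π : Equiv.Perm (Fin (m + 1))}
    (hdoor : IsDoor (ℓ ∘ kuhnVertex (c, π)) 0) : (c (π 0) : ℕ) + 1 < N := by
  obtain ⟨j, hj⟩ := isDoor_zero_iff.mp hdoor (π 0) (π 0).isLt
  refine lt_of_le_of_ne (c (π 0)).isLt fun hN => hℓ.ne_of_eq_top _ (kuhnVertex_le _ _) (π 0) ?_ hj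
  simp [kuhnVertex, hN]

lemma IsSpernerLabelling.eq_last_of_isDoor_last (hℓ : IsSpernerLabelling N (m + 1) ℓ)
    {c : Fin (m + 1) → Fin N} {π : Equiv.Perm (Fin (m + 1))}
    (hdoor : IsDoor (ℓ ∘ kuhnVertex (c, π)) (Fin.last (m + 1)))
    (hc : (c (π (Fin.last m)) : ℕ) = 0) : π (Fin.last m) = Fin.last m := by
  obtain ⟨j, hj⟩ := isDoor_last_iff.mp hdoor m (Nat.lt_succ_self m)
  have := hℓ.le_of_eq_zero (kuhnVertex (c, π) j.castSucc) (kuhnVertex_le _ _) (π (Fin.last m))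
    (by simp [kuhnVertex, hc, Fin.is_le])
  exact Fin.ext (le_antisymm (Fin.is_le _) (by simpa [← hj] using this))

/- The facet opposite the last vertex lies in the hyperplane `p_{π m} = c_{π m}`, here a face of
the big cube. -/
def OnBottom (x : KuhnSimplex (m + 1) N × Fin (m + 2)) : Prop :=
  x.2 = Fin.last (m + 1) ∧ (x.1.1 (x.1.2 (Fin.last m)) : ℕ) = 0

lemma val_ofNat_of_ne_zero_of_ne_last {k : Fin (m + 2)} (h0 : k ≠ 0)
    (hl : k ≠ Fin.last (m + 1)) :
    (Fin.ofNat (m + 1) (k - 1) : ℕ) + 1 = k ∧ (Fin.ofNat (m + 1) k : ℕ) = k := by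
  have hpos : (k : ℕ) ≠ 0 := Fin.val_ne_zero_iff.mpr h0
  have hlt : (k : ℕ) < m + 1 := Fin.val_lt_last hl
  simp only [Fin.val_ofNat]
  rw [Nat.mod_eq_of_lt (by omega), Nat.mod_eq_of_lt hlt]
  omega

variable [NeZero N]

/- The simplex on the other side of the facet opposite vertex `k`, with its vertex opposite that
facet. -/
def acrossFacet : KuhnSimplex (m + 1) N × Fin (m + 2) → KuhnSimplex (m + 1) N × Fin (m + 2)
  | ((c, π), k) =>
    if k = 0 then ((c + Pi.single (π 0) 1, π * finRotate (m + 1)), Fin.last (m + 1))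
    else if k = Fin.last (m + 1) then
      ((c - Pi.single (π (Fin.last m)) 1, π * (finRotate (m + 1))⁻¹), 0)
    else ((c, π * Equiv.swap (Fin.ofNat (m + 1) (k - 1)) (Fin.ofNat (m + 1) k)), k)

section
variable (c : Fin (m + 1) → Fin N) (π : Equiv.Perm (Fin (m + 1)))

lemma acrossFacet_zero : acrossFacet ((c, π), 0) =
    ((c + Pi.single (π 0) 1, π * finRotate (m + 1)), Fin.last (m + 1)) := by
  simp [acrossFacet]

lemma acrossFacet_last : acrossFacet ((c, π), Fin.last (m + 1)) =
    ((c - Pi.single (π (Fin.last m)) 1, π * (finRotate (m + 1))⁻¹), 0) := by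
  simp [acrossFacet, Fin.ext_iff]

lemma acrossFacet_of_ne {k : Fin (m + 2)} (h0 : k ≠ 0) (hl : k ≠ Fin.last (m + 1)) :
    acrossFacet ((c, π), k) =
      ((c, π * Equiv.swap (Fin.ofNat (m + 1) (k - 1)) (Fin.ofNat (m + 1) k)), k) := by
  simp [acrossFacet, h0, hl]

end

lemma acrossFacet_involutive : Function.Involutive (acrossFacet (m := m) (N := N)) := by
  rintro ⟨⟨c, π⟩, k⟩
  by_cases h0 : k = 0
  · subst h0
    rw [acrossFacet_zero, acrossFacet_last, Equiv.Perm.mul_apply, finRotate_last,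
      add_sub_cancel_right, mul_inv_cancel_right]
  by_cases hl : k = Fin.last (m + 1)
  · subst hl
    rw [acrossFacet_last, acrossFacet_zero, Equiv.Perm.mul_apply, finRotate_inv_zero,
      sub_add_cancel, inv_mul_cancel_right]
  · rw [acrossFacet_of_ne c π h0 hl, acrossFacet_of_ne _ _ h0 hl, mul_assoc, Equiv.swap_mul_self,
      mul_one]

lemma acrossFacet_ne (x : KuhnSimplex (m + 1) N × Fin (m + 2)) : acrossFacet x ≠ x := by
  obtain ⟨⟨c, π⟩, k⟩ := x
  by_cases h0 : k = 0
  · subst h0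
    rw [acrossFacet_zero]
    exact fun h => Fin.last_pos'.ne' (congrArg Prod.snd h)
  by_cases hl : k = Fin.last (m + 1)
  · subst hl
    rw [acrossFacet_last]
    exact fun h => Fin.last_pos'.ne (congrArg Prod.snd h)
  have hk := val_ofNat_of_ne_zero_of_ne_last h0 hl
  rw [acrossFacet_of_ne c π h0 hl]
  simp only [ne_eq, Prod.mk.injEq, and_true, true_and, mul_eq_left, Equiv.swap_eq_one_iff,
    Fin.ext_iff]
  omega

lemma isDoor_last_rotate {c : Fin (m + 1) → Fin N} {π : Equiv.Perm (Fin (m + 1))}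
    (hc : (c (π 0) : ℕ) + 1 < N) (hdoor : IsDoor (ℓ ∘ kuhnVertex (c, π)) 0) :
    IsDoor (ℓ ∘ kuhnVertex (c + Pi.single (π 0) 1, π * finRotate (m + 1))) (Fin.last (m + 1)) :=
  isDoor_last_iff.mpr fun m hm => by
    obtain ⟨j, hj⟩ := isDoor_zero_iff.mp hdoor m hm
    exact ⟨j, by simpa [kuhnVertex_rotate c π hc j] using hj⟩

lemma isDoor_zero_unrotate {c : Fin (m + 1) → Fin N} {π : Equiv.Perm (Fin (m + 1))}
    (hc : c (π (Fin.last m)) ≠ 0) (hdoor : IsDoor (ℓ ∘ kuhnVertex (c, π)) (Fin.last (m + 1))) :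
    IsDoor (ℓ ∘ kuhnVertex (c - Pi.single (π (Fin.last m)) 1, π * (finRotate (m + 1))⁻¹)) 0 := by
  set c' := c - Pi.single (π (Fin.last m)) 1
  set π' := π * (finRotate (m + 1))⁻¹
  have hπ' : π' 0 = π (Fin.last m) := by
    simp only [π', Equiv.Perm.coe_mul, Function.comp_apply, finRotate_inv_zero]
  have hc' : (c' (π' 0) : ℕ) + 1 < N := by
    have := (c (π (Fin.last m))).isLt
    have := Fin.val_ne_zero_iff.mpr hc
    simp only [hπ', c', Pi.sub_apply, Pi.single_eq_same, Fin.val_sub_one_of_ne_zero hc]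
    omega
  have hrot := kuhnVertex_rotate c' π' hc'
  rw [show c' + Pi.single (π' 0) 1 = c by simp [c', hπ'],
    show π' * finRotate (m + 1) = π by simp [π']] at hrot
  refine isDoor_zero_iff.mpr fun m hm => ?_
  obtain ⟨j, hj⟩ := isDoor_last_iff.mp hdoor m hm
  exact ⟨j, by rw [Function.comp_apply, ← hrot j]; exact hj⟩

lemma IsSpernerLabelling.isDoor_acrossFacet (hℓ : IsSpernerLabelling N (m + 1) ℓ)
    {x : KuhnSimplex (m + 1) N × Fin (m + 2)} (hx : IsDoor (ℓ ∘ kuhnVertex x.1) x.2)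
    (hb : ¬OnBottom x) :
    IsDoor (ℓ ∘ kuhnVertex (acrossFacet x).1) (acrossFacet x).2 ∧ ¬OnBottom (acrossFacet x) := by
  obtain ⟨⟨c, π⟩, k⟩ := x
  by_cases h0 : k = 0
  · subst h0
    have hc := hℓ.lt_of_isDoor_zero hx
    rw [acrossFacet_zero]
    refine ⟨isDoor_last_rotate hc hx, fun h => ?_⟩
    simp [OnBottom, Fin.val_add_one_of_lt' hc] at h
  by_cases hl : k = Fin.last (m + 1)
  · subst hl
    have hc : c (π (Fin.last m)) ≠ 0 := fun h => hb ⟨rfl, by simp only [h, Fin.val_zero]⟩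
    rw [acrossFacet_last]
    exact ⟨isDoor_zero_unrotate hc hx, fun h => Fin.last_pos.ne h.1⟩
  · rw [acrossFacet_of_ne c π h0 hl]
    refine ⟨hx.congr fun j hj => ?_, fun h => hl h.1⟩
    have hk := val_ofNat_of_ne_zero_of_ne_last h0 hl
    have hjk : (j : ℕ) ≠ k := Fin.val_ne_of_ne hj
    simp only [Function.comp_apply]
    rw [kuhnVertex_mul_swap c π (by omega)]

lemma IsSpernerLabelling.card_isDoor_modTwo_eq_onBottom (hℓ : IsSpernerLabelling N (m + 1) ℓ) :
    (#{x : KuhnSimplex (m + 1) N × Fin (m + 2) | IsDoor (ℓ ∘ kuhnVertex x.1) x.2} : ZMod 2) =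
      #{x : KuhnSimplex (m + 1) N × Fin (m + 2) |
        IsDoor (ℓ ∘ kuhnVertex x.1) x.2 ∧ OnBottom x} := by
  have hinner : Even #{x : KuhnSimplex (m + 1) N × Fin (m + 2) |
      IsDoor (ℓ ∘ kuhnVertex x.1) x.2 ∧ ¬OnBottom x} := by
    refine even_card_of_involution acrossFacet (fun x hx => ?_)
      (fun x _ => acrossFacet_involutive x) (fun x _ => acrossFacet_ne x)
    simp only [mem_filter, mem_univ, true_and] at hx ⊢
    exact hℓ.isDoor_acrossFacet hx.1 hx.2
  rw [← card_filter_add_card_filter_not OnBottom, filter_filter, filter_filter, Nat.cast_add,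
    ZMod.natCast_eq_zero_iff_even.mpr hinner, add_zero]

lemma isDoor_last_snoc_iff (c : Fin m → Fin N) (σ : Equiv.Perm (Fin m)) :
    IsDoor (ℓ ∘ kuhnVertex (Fin.snoc c 0, extendLast σ)) (Fin.last (m + 1)) ↔
      IsFull ((fun p => ℓ (Fin.snoc p 0)) ∘ kuhnVertex (c, σ)) := by
  simp [isDoor_last_iff, IsFull, kuhnVertex_snoc]

lemma IsSpernerLabelling.card_onBottom (hℓ : IsSpernerLabelling N (m + 1) ℓ) :
    #{x : KuhnSimplex (m + 1) N × Fin (m + 2) | IsDoor (ℓ ∘ kuhnVertex x.1) x.2 ∧ OnBottom x} =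
      #{s : KuhnSimplex m N | IsFull ((fun p => ℓ (Fin.snoc p 0)) ∘ kuhnVertex s)} := by
  refine (card_bij (fun s _ => ((Fin.snoc s.1 0, extendLast s.2), Fin.last (m + 1)))
    (fun s hs => ?_) (fun s _ t _ h => ?_) (fun x hx => ?_)).symm
  · simp only [mem_filter, mem_univ, true_and] at hs ⊢
    exact ⟨(isDoor_last_snoc_iff s.1 s.2).mpr hs, rfl, by simp⟩
  · simp only [Prod.mk.injEq, and_true] at h
    exact Prod.ext (by simpa using congrArg Fin.init h.1) (extendLast_injective h.2)
  · obtain ⟨⟨c, π⟩, k⟩ := x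
    obtain ⟨-, hdoor, rfl, hc⟩ := mem_filter.mp hx
    have hπ := hℓ.eq_last_of_isDoor_last hdoor hc
    obtain ⟨σ, rfl⟩ := exists_extendLast_eq hπ
    have hc : c = Fin.snoc (Fin.init c) 0 := by
      have hc : c (Fin.last m) = 0 := Fin.ext (by simpa [hπ] using hc)
      conv_lhs => rw [← Fin.snoc_init_self c, hc]
    rw [hc] at hdoor
    exact ⟨(Fin.init c, σ), by simpa using (isDoor_last_snoc_iff _ σ).mp hdoor, by rw [← hc]⟩

end Step

theorem IsSpernerLabelling.card_isFull_modTwo {N : ℕ} [NeZero N] :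
    ∀ {d : ℕ} {ℓ : (Fin d → ℕ) → ℕ}, IsSpernerLabelling N d ℓ →
      (#{s : KuhnSimplex d N | IsFull (ℓ ∘ kuhnVertex s)} : ZMod 2) = 1
  | 0, ℓ, hℓ => by
    have hfull : ∀ s : KuhnSimplex 0 N, IsFull (ℓ ∘ kuhnVertex s) := fun s m hm =>
      ⟨0, by simpa [Nat.le_zero.mp hm] using hℓ.le (kuhnVertex s 0) (kuhnVertex_le s 0)⟩
    simp [filter_true_of_mem fun s _ => hfull s]
  | m + 1, ℓ, hℓ => by
    rw [card_isFull_modTwo_eq_card_isDoor hℓ, hℓ.card_isDoor_modTwo_eq_onBottom, hℓ.card_onBottom]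
    exact hℓ.face.card_isFull_modTwo

theorem IsSpernerLabelling.exists_isFull {d N : ℕ} [NeZero N] {ℓ : (Fin d → ℕ) → ℕ}
    (hℓ : IsSpernerLabelling N d ℓ) : ∃ s : KuhnSimplex d N, IsFull (ℓ ∘ kuhnVertex s) := by
  by_contra h
  simpa [filter_false_of_mem fun s _ => not_exists.mp h s] using hℓ.card_isFull_modTwo

section FirstFailure

variable {d N : ℕ}

noncomputable def firstFailure (P : Fin d → Prop) : ℕ := sInf {t | ∀ h : t < d, ¬P ⟨t, h⟩}

lemma firstFailure_spec (P : Fin d → Prop) :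
    ∀ h : firstFailure P < d, ¬P ⟨firstFailure P, h⟩ :=
  Nat.sInf_mem (s := {t | ∀ h : t < d, ¬P ⟨t, h⟩}) ⟨d, fun h => absurd h (lt_irrefl d)⟩

lemma firstFailure_le (P : Fin d → Prop) : firstFailure P ≤ d :=
  Nat.sInf_le fun h => absurd h (lt_irrefl d)

lemma firstFailure_le_of_not {P : Fin d → Prop} {i : Fin d} (hi : ¬P i) : firstFailure P ≤ i :=
  Nat.sInf_le fun _ => hi

lemma of_firstFailure_eq {P : Fin d → Prop} (h : firstFailure P = d) (i : Fin d) : P i := by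
  by_contra hi
  exact absurd (firstFailure_le_of_not hi) (by omega)

lemma isSpernerLabelling_firstFailure (P : (Fin d → ℕ) → Fin d → Prop)
    (hzero : ∀ p, (∀ i, p i ≤ N) → ∀ i, p i = 0 → ¬P p i)
    (htop : ∀ p, (∀ i, p i ≤ N) → ∀ i, p i = N → P p i) :
    IsSpernerLabelling N d (fun p => firstFailure (P p)) where
  le p _ := firstFailure_le (P p)
  le_of_eq_zero p hp i hi := firstFailure_le_of_not (hzero p hp i hi)
  ne_of_eq_top p hp i hi heq :=
    firstFailure_spec (P p) (heq ▸ i.isLt) (by simpa [heq] using htop p hp i hi)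

theorem exists_kuhnSimplex_forall_and_forall_not [NeZero N] (P : (Fin d → ℕ) → Fin d → Prop)
    (hzero : ∀ p, (∀ i, p i ≤ N) → ∀ i, p i = 0 → ¬P p i)
    (htop : ∀ p, (∀ i, p i ≤ N) → ∀ i, p i = N → P p i) :
    ∃ s : KuhnSimplex d N,
      (∃ k, ∀ i, P (kuhnVertex s k) i) ∧ ∀ i, ∃ k, ¬P (kuhnVertex s k) i := by
  obtain ⟨s, hs⟩ := (isSpernerLabelling_firstFailure P hzero htop).exists_isFull
  refine ⟨s, ?_, fun i => ?_⟩
  · obtain ⟨k, hk⟩ := hs d le_rfl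
    exact ⟨k, of_firstFailure_eq hk⟩
  · obtain ⟨k, hk⟩ := hs i i.isLt.le
    simp only [Function.comp_apply] at hk
    exact ⟨k, by simpa [hk] using firstFailure_spec (P (kuhnVertex s k)) (hk ▸ i.isLt)⟩

end FirstFailure

section Cube

variable {n : ℕ} {a : ℝ}

noncomputable def gridPoint (a : ℝ) (N : ℕ) (p : Fin n → ℕ) : Fin n → ℝ :=
  fun i => -a + 2 * a * (p i / N)

lemma gridPoint_mem_Icc (ha : 0 ≤ a) {N : ℕ} {p : Fin n → ℕ} (hp : ∀ i, p i ≤ N) :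
    gridPoint a N p ∈ Set.Icc (fun _ => -a) (fun _ => a) := by
  have h : ∀ i, (0 : ℝ) ≤ p i / N ∧ (p i : ℝ) / N ≤ 1 := fun i =>
    ⟨by positivity, div_le_one_of_le₀ (by exact_mod_cast hp i) (Nat.cast_nonneg N)⟩
  constructor <;> intro i <;> simp only [gridPoint] <;> nlinarith [h i]

lemma gridPoint_apply_of_eq_zero {N : ℕ} {p : Fin n → ℕ} {i : Fin n} (hi : p i = 0) :
    gridPoint a N p i = -a := by
  simp [gridPoint, hi]

lemma gridPoint_apply_of_eq {N : ℕ} (hN : N ≠ 0) {p : Fin n → ℕ} {i : Fin n} (hi : p i = N) :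
    gridPoint a N p i = a := by
  simp only [gridPoint, hi, div_self (Nat.cast_ne_zero.mpr hN : (N : ℝ) ≠ 0)]
  ring

lemma dist_gridPoint_le (ha : 0 ≤ a) {N : ℕ} {p q : Fin n → ℕ}
    (hpq : ∀ i, |(p i : ℝ) - q i| ≤ 1) : dist (gridPoint a N p) (gridPoint a N q) ≤ 2 * a / N := by
  refine (dist_pi_le_iff (by positivity)).mpr fun i => ?_
  have : gridPoint a N p i - gridPoint a N q i = 2 * a / N * ((p i : ℝ) - q i) := by
    simp only [gridPoint]; ring
  rw [Real.dist_eq, this, abs_mul, abs_of_nonneg (by positivity)]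
  exact mul_le_of_le_one_right (by positivity) (hpq i)

variable {f : (Fin n → ℝ) → (Fin n → ℝ)}

theorem exists_forall_nonneg_and_near_nonpos (ha : 0 ≤ a)
    (hlow : ∀ i, ∀ x ∈ Set.Icc (fun _ => -a) (fun _ => a), x i = -a → f x i ≤ 0)
    (hhigh : ∀ i, ∀ x ∈ Set.Icc (fun _ => -a) (fun _ => a), x i = a → 0 ≤ f x i)
    (N : ℕ) [NeZero N] :
    ∃ y ∈ Set.Icc (fun _ => -a) (fun _ => a), (∀ i, 0 ≤ f y i) ∧
      ∀ i, ∃ z ∈ Set.Icc (fun _ => -a) (fun _ => a), f z i ≤ 0 ∧ dist y z ≤ 2 * a / N := by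
  have hmem := fun (s : KuhnSimplex n N) k => gridPoint_mem_Icc ha (kuhnVertex_le s k)
  obtain ⟨s, ⟨ky, hky⟩, hkz⟩ := exists_kuhnSimplex_forall_and_forall_not
    (fun p i => p i = N ∨ 0 < f (gridPoint a N p) i)
    (fun p hp i hi => by
      simp only [hi, (NeZero.ne N).symm, false_or, not_lt]
      exact hlow i _ (gridPoint_mem_Icc ha hp) (gridPoint_apply_of_eq_zero hi))
    (fun p _ i hi => Or.inl hi)
  refine ⟨gridPoint a N (kuhnVertex s ky), hmem s ky, fun i => ?_, fun i => ?_⟩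
  · rcases hky i with h | h
    · exact hhigh i _ (hmem s ky) (gridPoint_apply_of_eq (NeZero.ne N) h)
    · exact h.le
  · obtain ⟨kz, hz⟩ := hkz i
    push Not at hz
    exact ⟨_, hmem s kz, hz.2, dist_gridPoint_le ha (abs_kuhnVertex_sub_le s ky kz)⟩

theorem exists_norm_lt (ha : 0 ≤ a) (hf : ContinuousOn f (Set.Icc (fun _ => -a) (fun _ => a)))
    (hlow : ∀ i, ∀ x ∈ Set.Icc (fun _ => -a) (fun _ => a), x i = -a → f x i ≤ 0)
    (hhigh : ∀ i, ∀ x ∈ Set.Icc (fun _ => -a) (fun _ => a), x i = a → 0 ≤ f x i)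
    {ε : ℝ} (hε : 0 < ε) : ∃ y ∈ Set.Icc (fun _ => -a) (fun _ => a), ‖f y‖ < ε := by
  obtain ⟨δ, hδ, hfδ⟩ :=
    Metric.uniformContinuousOn_iff.mp (isCompact_Icc.uniformContinuousOn_of_continuous hf) ε hε
  obtain ⟨N, hN⟩ := exists_nat_gt (2 * a / δ)
  have hNpos : (0 : ℝ) < N := lt_of_le_of_lt (by positivity) hN
  have : NeZero N := ⟨by exact_mod_cast hNpos.ne'⟩
  have hmesh : 2 * a / N < δ := by
    rw [div_lt_iff₀ hNpos]; rw [div_lt_iff₀ hδ] at hN; linarith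
  obtain ⟨y, hy, hpos, hnear⟩ := exists_forall_nonneg_and_near_nonpos ha hlow hhigh N
  refine ⟨y, hy, (pi_norm_lt_iff hε).mpr fun i => ?_⟩
  obtain ⟨z, hz, hfz, hyz⟩ := hnear i
  calc ‖f y i‖ = f y i := Real.norm_of_nonneg (hpos i)
    _ ≤ dist (f y i) (f z i) := by rw [Real.dist_eq]; exact (le_abs_self _).trans' (by linarith)
    _ ≤ dist (f y) (f z) := dist_le_pi_dist (f y) (f z) i
    _ < ε := hfδ y hy z hz (hyz.trans_lt hmesh)

end Cube

end PoincareMiranda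

/-- Poincaré–Miranda theorem. -/
theorem stmt5 (n : ℕ) (a : ℝ) (ha : 0 < a)
    (f : (Fin n → ℝ) → (Fin n → ℝ))
    (S : Set (Fin n → ℝ)) (hS : S = Set.Icc (fun _ => -a) (fun _ => a))
    (hf : ContinuousOn f S)
    (hlow : ∀ i : Fin n, ∀ x ∈ S, x i = -a → f x i ≤ 0)
    (hhigh : ∀ i : Fin n, ∀ x ∈ S, x i = a → 0 ≤ f x i) :
    ∃ x ∈ S, f x = 0 := by
  subst hS
  exact isCompact_Icc.exists_eq_zero_of_forall_exists_norm_lt hf fun _ hε =>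
    PoincareMiranda.exists_norm_lt ha.le hf hlow hhigh hε
end
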